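/- (Turning point theorem, unstable side λ > 0.) Let φ : ℝ → E be a C^∞ curve and T, Y_1, …, Y_p : ℝ → ℝ be C^∞ functions such that for every λ the point φ(λ) satisfies the first law with temperature T(λ) and potentials Y_i(λ), with T(0) > 0. Suppose λ = 0 is a turning point: φ′(0) ≠ 0 and (M∘φ)′(0) = (X^i∘φ)′(0) = 0 for all i (hence also (S∘φ)′(0) = 0). Suppose σ := (d/dλ)[T′(λ)·(S∘φ)′(λ) + Σ_{i=1}^p Y_i′(λ)·(X^i∘φ)′(λ)] evaluated at λ = 0 satisfies σ > 0. Finally, suppose there exists a continuous map ũ : ℝ → E such that for all λ in a neighborhood of 0, λ·DS_{φ(λ)}(ũ(λ)) = (S∘φ)′(λ) and λ·DX^i_{φ(λ)}(ũ(λ)) = (X^i∘φ)′(λ) for all i. Then there exists ε > 0 such that for all λ ∈ (0, ε), the vector û(λ) := φ′(λ) − λ·ũ(λ) satisfies DM_{φ(λ)}(û(λ)) = DS_{φ(λ)}(û(λ)) = DX^i_{φ(λ)}(û(λ)) = 0 for all i, and B_{φ(λ)}(û(λ), û(λ)) < 0; in particular φ(λ) is thermodynamically unstable for all λ ∈ (0,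 ε). -/

import Mathlib

/-!
Differentiating the first law along the curve gives
`B_{φ(λ)}(φ′(λ), ·) = T′(λ) DS_{φ(λ)} + ∑ Y_i′(λ) DX^i_{φ(λ)}`. Hence the vector
`û = φ′ − λ ũ`, which keeps `S` and all `X^i` (and then, by the first law, `M`) fixed to first
order, satisfies `B(φ′, û) = 0`, and by symmetry of `B`
`B(û, û) = λ² B(ũ, ũ) − g(λ)` with `g = T′ (S∘φ)′ + ∑ Y_i′ (X^i∘φ)′`.
At the turning point the first law with `T(0) > 0` forces `(S∘φ)′(0) = 0`, so `g(0) = 0` and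
`g(λ) ≈ σ λ` with `σ > 0` dominates the `λ²` term for small `λ > 0`.
-/
open Filter Topology

/-- The second Fréchet derivative of `f : E → ℝ` at `φ`, applied to `u`, `v`. -/
noncomputable def D2 {E : Type*} [NormedAddCommGroup E] [NormedSpace ℝ E]
    (f : E → ℝ) (φ u v : E) : ℝ :=
  fderiv ℝ (fderiv ℝ f) φ u v

/-- `φ` satisfies the first law with temperature `T` and potentials `Y i`:
`DM_φ = T·DS_φ + ∑ i, Y i · DX^i_φ` as continuous linear functionals. -/
def FirstLaw {E : Type*} [NormedAddCommGroup E] [NormedSpace ℝ E] {p : ℕ}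
    (M S : E → ℝ) (X : Fin p → E → ℝ) (φ : E) (T : ℝ) (Y : Fin p → ℝ) : Prop :=
  fderiv ℝ M φ = T • fderiv ℝ S φ + ∑ i, Y i • fderiv ℝ (X i) φ

/-- The canonical bilinear form
`B_φ(u,v) = D²M_φ(u,v) − T·D²S_φ(u,v) − ∑ i, Y i·D²X^i_φ(u,v)`. -/
noncomputable def Bform {E : Type*} [NormedAddCommGroup E] [NormedSpace ℝ E] {p : ℕ}
    (M S : E → ℝ) (X : Fin p → E → ℝ) (φ : E) (T : ℝ) (Y : Fin p → ℝ) (u v : E) : ℝ :=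
  D2 M φ u v - T * D2 S φ u v - ∑ i, Y i * D2 (X i) φ u v

section

variable {E : Type*} [NormedAddCommGroup E] [NormedSpace ℝ E]

theorem ContinuousLinearMap.apply_sub_smul_self_of_apply_eq_zero (L : E →L[ℝ] E →L[ℝ] ℝ)
    {a b : E} (c : ℝ) (hL : L b a = L a b) (ha : L a (a - c • b) = 0) :
    L (a - c • b) (a - c • b) = c ^ 2 * L b b - c * L a b := by
  simp only [map_sub, map_smul, sub_apply, smul_apply, smul_eq_mul] at ha ⊢
  rw [hL]
  linear_combination ha

theorem eventually_sq_mul_sub_neg {g b : ℝ → ℝ} (hg0 : g 0 = 0) (hg : 0 < deriv g 0)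
    (hb : ContinuousAt b 0) : ∀ᶠ l in 𝓝[>] (0 : ℝ), l ^ 2 * b l - g l < 0 := by
  have hslope : Tendsto (fun l => g l / l) (𝓝[>] 0) (𝓝 (deriv g 0)) := by
    have hslope_eq : slope g 0 = fun l => g l / l :=
      funext fun l => by simp [slope_def_field, hg0]
    rw [← hslope_eq]
    exact (differentiableAt_of_deriv_ne_zero hg.ne').hasDerivAt.tendsto_slope.mono_left
      (nhdsGT_le_nhdsNE 0)
  have hlim : Tendsto (fun l => l * b l - g l / l) (𝓝[>] 0) (𝓝 (0 * b 0 - deriv g 0)) :=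
    ((tendsto_id.mul hb).mono_left nhdsWithin_le_nhds).sub hslope
  have hlim_neg : 0 * b 0 - deriv g 0 < 0 := by simpa using hg
  filter_upwards [hlim.eventually_lt_const hlim_neg, self_mem_nhdsWithin] with l hneg (hl : 0 < l)
  have hfactor : l ^ 2 * b l - g l = l * (l * b l - g l / l) := by field_simp
  rw [hfactor]
  exact mul_neg_of_pos_of_neg hl hneg

theorem hasDerivAt_fderiv_comp {F : Type*} [NormedAddCommGroup F] [NormedSpace ℝ F]
    {f : E → F} (hf : ContDiff ℝ 2 f) {φ : ℝ → E} {l : ℝ} (hφ : DifferentiableAt ℝ φ l) :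
    HasDerivAt (fun l => fderiv ℝ f (φ l)) (fderiv ℝ (fderiv ℝ f) (φ l) (deriv φ l)) l :=
  ((hf.fderiv_right (m := 1) le_rfl).differentiable one_ne_zero _).hasFDerivAt.comp_hasDerivAt l
    hφ.hasDerivAt

theorem fderiv_apply_deriv_sub_smul_eq_zero {f : E → ℝ} {φ : ℝ → E} {l : ℝ} {u : E}
    (hf : DifferentiableAt ℝ f (φ l)) (hφ : DifferentiableAt ℝ φ l)
    (hu : l * fderiv ℝ f (φ l) u = deriv (f ∘ φ) l) :
    fderiv ℝ f (φ l) (deriv φ l - l • u) = 0 := by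
  rw [map_sub, map_smul, smul_eq_mul, hu, fderiv_comp_deriv l hf hφ, sub_self]

variable {p : ℕ} {M S : E → ℝ} {X : Fin p → E → ℝ}

noncomputable def bformCLM (M S : E → ℝ) (X : Fin p → E → ℝ) (x : E) (T : ℝ)
    (Y : Fin p → ℝ) : E →L[ℝ] E →L[ℝ] ℝ :=
  fderiv ℝ (fderiv ℝ M) x - T • fderiv ℝ (fderiv ℝ S) x - ∑ i, Y i • fderiv ℝ (fderiv ℝ (X i)) x

theorem bformCLM_apply (x : E) (T : ℝ) (Y : Fin p → ℝ) (u v : E) :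
    bformCLM M S X x T Y u v = Bform M S X x T Y u v := by
  simp [bformCLM, Bform, D2]

theorem bformCLM_symm (hM : ContDiff ℝ 2 M) (hS : ContDiff ℝ 2 S) (hX : ∀ i, ContDiff ℝ 2 (X i))
    (x : E) (T : ℝ) (Y : Fin p → ℝ) (u v : E) :
    bformCLM M S X x T Y u v = bformCLM M S X x T Y v u := by
  have symm {f : E → ℝ} (hf : ContDiff ℝ 2 f) :=
    hf.contDiffAt.isSymmSndFDerivAt (x := x) (by simp)
  simp [bformCLM, symm hM u v, symm hS u v, fun i => symm (hX i) u v]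

theorem continuous_bformCLM (hM : ContDiff ℝ 2 M) (hS : ContDiff ℝ 2 S)
    (hX : ∀ i, ContDiff ℝ 2 (X i)) {φ : ℝ → E} {T : ℝ → ℝ} {Y : Fin p → ℝ → ℝ}
    (hφ : Continuous φ) (hT : Continuous T) (hY : ∀ i, Continuous (Y i)) :
    Continuous fun l => bformCLM M S X (φ l) (T l) (fun i => Y i l) := by
  have hD2 {f : E → ℝ} (hf : ContDiff ℝ 2 f) : Continuous fun l => fderiv ℝ (fderiv ℝ f) (φ l) :=
    ((hf.fderiv_right (m := 1) le_rfl).continuous_fderiv one_ne_zero).comp hφ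
  exact ((hD2 hM).sub (hT.smul (hD2 hS))).sub
    (continuous_finsetSum _ fun i _ => (hY i).smul (hD2 (hX i)))

theorem FirstLaw.apply {x : E} {T : ℝ} {Y : Fin p → ℝ} (h : FirstLaw M S X x T Y) (v : E) :
    fderiv ℝ M x v = T * fderiv ℝ S x v + ∑ i, Y i * fderiv ℝ (X i) x v := by
  rw [h]
  simp

theorem FirstLaw.fderiv_apply_eq_zero {x v : E} {T : ℝ} {Y : Fin p → ℝ}
    (h : FirstLaw M S X x T Y) (hS : fderiv ℝ S x v = 0) (hX : ∀ i, fderiv ℝ (X i) x v = 0) :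
    fderiv ℝ M x v = 0 := by
  simp [h.apply, hS, hX]

theorem FirstLaw.fderiv_entropy_apply_eq_zero {x v : E} {T : ℝ} {Y : Fin p → ℝ}
    (h : FirstLaw M S X x T Y) (hT : T ≠ 0) (hM : fderiv ℝ M x v = 0)
    (hX : ∀ i, fderiv ℝ (X i) x v = 0) : fderiv ℝ S x v = 0 := by
  simpa [h.apply, hX, hT] using hM

theorem bformCLM_deriv_eq (hM : ContDiff ℝ 2 M) (hS : ContDiff ℝ 2 S)
    (hX : ∀ i, ContDiff ℝ 2 (X i)) {φ : ℝ → E} {T : ℝ → ℝ} {Y : Fin p → ℝ → ℝ} {l : ℝ}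
    (hφ : DifferentiableAt ℝ φ l) (hT : DifferentiableAt ℝ T l)
    (hY : ∀ i, DifferentiableAt ℝ (Y i) l)
    (hfl : ∀ l, FirstLaw M S X (φ l) (T l) (fun i => Y i l)) :
    bformCLM M S X (φ l) (T l) (fun i => Y i l) (deriv φ l)
      = deriv T l • fderiv ℝ S (φ l) + ∑ i, deriv (Y i) l • fderiv ℝ (X i) (φ l) := by
  have hlhs := hasDerivAt_fderiv_comp hM hφ
  rw [show (fun l => fderiv ℝ M (φ l)) = _ from funext hfl] at hlhs
  have hrhs : HasDerivAt (fun l => T l • fderiv ℝ S (φ l) + ∑ i, Y i l • fderiv ℝ (X i) (φ l))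
      ((T l • fderiv ℝ (fderiv ℝ S) (φ l) (deriv φ l) + deriv T l • fderiv ℝ S (φ l)) +
        ∑ i, (Y i l • fderiv ℝ (fderiv ℝ (X i)) (φ l) (deriv φ l)
          + deriv (Y i) l • fderiv ℝ (X i) (φ l))) l :=
    (hT.hasDerivAt.smul (hasDerivAt_fderiv_comp hS hφ)).add
      (HasDerivAt.fun_sum fun i _ => (hY i).hasDerivAt.smul (hasDerivAt_fderiv_comp (hX i) hφ))
  simp only [bformCLM, sub_apply, smul_apply, FunLike.coe_sum, Finset.sum_apply,
    hlhs.unique hrhs, Finset.sum_add_distrib]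
  abel

theorem bformCLM_deriv_sub_smul_self (hM : ContDiff ℝ 2 M) (hS : ContDiff ℝ 2 S)
    (hX : ∀ i, ContDiff ℝ 2 (X i)) {φ : ℝ → E} {T : ℝ → ℝ} {Y : Fin p → ℝ → ℝ} {l : ℝ}
    (hφ : DifferentiableAt ℝ φ l) (hT : DifferentiableAt ℝ T l)
    (hY : ∀ i, DifferentiableAt ℝ (Y i) l)
    (hfl : ∀ l, FirstLaw M S X (φ l) (T l) (fun i => Y i l)) {u : E}
    (hSu : l * fderiv ℝ S (φ l) u = deriv (S ∘ φ) l)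
    (hXu : ∀ i, l * fderiv ℝ (X i) (φ l) u = deriv (X i ∘ φ) l) :
    bformCLM M S X (φ l) (T l) (fun i => Y i l) (deriv φ l - l • u) (deriv φ l - l • u)
      = l ^ 2 * bformCLM M S X (φ l) (T l) (fun i => Y i l) u u
        - (deriv T l * deriv (S ∘ φ) l + ∑ i, deriv (Y i) l * deriv (X i ∘ φ) l) := by
  set L := bformCLM M S X (φ l) (T l) (fun i => Y i l)
  have hL := bformCLM_deriv_eq hM hS hX hφ hT hY hfl
  have hS0 := fderiv_apply_deriv_sub_smul_eq_zero (hS.differentiable two_ne_zero _) hφ hSu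
  have hX0 i :=
    fderiv_apply_deriv_sub_smul_eq_zero ((hX i).differentiable two_ne_zero _) hφ (hXu i)
  have hLu : L (deriv φ l) (deriv φ l - l • u) = 0 := by simp [L, hL, hS0, hX0]
  rw [L.apply_sub_smul_self_of_apply_eq_zero l (bformCLM_symm hM hS hX _ _ _ _ _) hLu, hL]
  simp [← hSu, ← hXu, mul_add, Finset.mul_sum, mul_left_comm]

end

theorem turning_point_theorem_pos_general
    {E : Type*} [NormedAddCommGroup E] [NormedSpace ℝ E]
    {p : ℕ} (M S : E → ℝ) (X : Fin p → E → ℝ)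
    (hM : ContDiff ℝ (⊤ : ℕ∞) M) (hS : ContDiff ℝ (⊤ : ℕ∞) S)
    (hX : ∀ i, ContDiff ℝ (⊤ : ℕ∞) (X i))
    (φ : ℝ → E) (hφ : ContDiff ℝ (⊤ : ℕ∞) φ)
    (T : ℝ → ℝ) (Y : Fin p → ℝ → ℝ)
    (hT : ContDiff ℝ (⊤ : ℕ∞) T) (hY : ∀ i, ContDiff ℝ (⊤ : ℕ∞) (Y i))
    (hfl : ∀ l : ℝ, FirstLaw M S X (φ l) (T l) (fun i => Y i l))
    (hT0 : 0 < T 0)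
    (hturnM : deriv (M ∘ φ) 0 = 0) (hturnX : ∀ i, deriv (X i ∘ φ) 0 = 0)
    (hσ : 0 < deriv (fun l =>
      deriv T l * deriv (S ∘ φ) l + ∑ i, deriv (Y i) l * deriv (X i ∘ φ) l) 0)
    (u' : ℝ → E) (hu'cont : Continuous u')
    (hu' : ∀ᶠ l in 𝓝 (0 : ℝ),
      l * fderiv ℝ S (φ l) (u' l) = deriv (S ∘ φ) l ∧
      ∀ i, l * fderiv ℝ (X i) (φ l) (u' l) = deriv (X i ∘ φ) l) :
    ∃ ε > 0, ∀ l ∈ Set.Ioo (0 : ℝ) ε,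
      fderiv ℝ M (φ l) (deriv φ l - l • u' l) = 0 ∧
      fderiv ℝ S (φ l) (deriv φ l - l • u' l) = 0 ∧
      (∀ i, fderiv ℝ (X i) (φ l) (deriv φ l - l • u' l) = 0) ∧
      Bform M S X (φ l) (T l) (fun i => Y i l)
        (deriv φ l - l • u' l) (deriv φ l - l • u' l) < 0 := by
  have hM2 : ContDiff ℝ 2 M := hM.of_le (WithTop.coe_le_coe.mpr le_top)
  have hS2 : ContDiff ℝ 2 S := hS.of_le (WithTop.coe_le_coe.mpr le_top)
  have hX2 i : ContDiff ℝ 2 (X i) := (hX i).of_le (WithTop.coe_le_coe.mpr le_top)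
  have hφd : Differentiable ℝ φ := hφ.differentiable (by simp)
  have hTd : Differentiable ℝ T := hT.differentiable (by simp)
  have hYd i : Differentiable ℝ (Y i) := (hY i).differentiable (by simp)
  have hchain {f : E → ℝ} (hf : ContDiff ℝ 2 f) (l : ℝ) :=
    fderiv_comp_deriv l (hf.differentiable two_ne_zero (φ l)) (hφd l)
  have hSφ0 : deriv (S ∘ φ) 0 = 0 := by
    rw [hchain hS2]
    refine (hfl 0).fderiv_entropy_apply_eq_zero hT0.ne' ?_ fun i => ?_
    · rwa [← hchain hM2]
    · rw [← hchain (hX2 i), hturnX]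
  have hBc := (continuous_bformCLM hM2 hS2 hX2 hφ.continuous hT.continuous
    fun i => (hY i).continuous).clm_apply hu'cont |>.clm_apply hu'cont
  have hB := eventually_sq_mul_sub_neg (by simp [hSφ0, hturnX]) hσ hBc.continuousAt
  refine (mem_nhdsGT_iff_exists_Ioo_subset.mp ?_).imp fun ε ⟨hε, hsub⟩ => ⟨hε, hsub⟩
  filter_upwards [hu'.filter_mono nhdsWithin_le_nhds, hB] with l ⟨hSu, hXu⟩ hneg
  have hS0 :=
    fderiv_apply_deriv_sub_smul_eq_zero (hS2.differentiable two_ne_zero _) (hφd l) hSu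
  have hX0 i :=
    fderiv_apply_deriv_sub_smul_eq_zero ((hX2 i).differentiable two_ne_zero _) (hφd l) (hXu i)
  refine ⟨(hfl l).fderiv_apply_eq_zero hS0 hX0, hS0, hX0, ?_⟩
  rwa [← bformCLM_apply,
    bformCLM_deriv_sub_smul_self hM2 hS2 hX2 (hφd l) (hTd l) (fun i => hYd i l) hfl hSu hXu]

/-- Turning point theorem, unstable side `λ > 0`: along a smooth family of
first-law (thermodynamic equilibrium) solutions with a turning point at `λ = 0` and `σ > 0`,
for all sufficiently small `λ > 0` the perturbation `û(λ) = φ′(λ) − λ·ũ(λ)` keeps `M`, `S`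
and all `X^i` fixed to first order and has `B < 0`, so `φ(λ)` is thermodynamically unstable. -/
theorem turning_point_theorem_pos
    {E : Type*} [NormedAddCommGroup E] [NormedSpace ℝ E] [CompleteSpace E]
    {p : ℕ} (M S : E → ℝ) (X : Fin p → E → ℝ)
    (hM : ContDiff ℝ (⊤ : ℕ∞) M) (hS : ContDiff ℝ (⊤ : ℕ∞) S)
    (hX : ∀ i, ContDiff ℝ (⊤ : ℕ∞) (X i))
    (φ : ℝ → E) (hφ : ContDiff ℝ (⊤ : ℕ∞) φ)
    (T : ℝ → ℝ) (Y : Fin p → ℝ → ℝ)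
    (hT : ContDiff ℝ (⊤ : ℕ∞) T) (hY : ∀ i, ContDiff ℝ (⊤ : ℕ∞) (Y i))
    (hfl : ∀ l : ℝ, FirstLaw M S X (φ l) (T l) (fun i => Y i l))
    (hT0 : 0 < T 0)
    (hturn : deriv φ 0 ≠ 0)
    (hturnM : deriv (M ∘ φ) 0 = 0) (hturnX : ∀ i, deriv (X i ∘ φ) 0 = 0)
    (hσ : 0 < deriv (fun l =>
      deriv T l * deriv (S ∘ φ) l + ∑ i, deriv (Y i) l * deriv (X i ∘ φ) l) 0)
    (u' : ℝ → E) (hu'cont : Continuous u')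
    (hu' : ∀ᶠ l in 𝓝 (0 : ℝ),
      l * fderiv ℝ S (φ l) (u' l) = deriv (S ∘ φ) l ∧
      ∀ i, l * fderiv ℝ (X i) (φ l) (u' l) = deriv (X i ∘ φ) l) :
    ∃ ε > 0, ∀ l ∈ Set.Ioo (0 : ℝ) ε,
      fderiv ℝ M (φ l) (deriv φ l - l • u' l) = 0 ∧
      fderiv ℝ S (φ l) (deriv φ l - l • u' l) = 0 ∧
      (∀ i, fderiv ℝ (X i) (φ l) (deriv φ l - l • u' l) = 0) ∧
      Bform M S X (φ l) (T l) (fun i => Y i l)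
        (deriv φ l - l • u' l) (deriv φ l - l • u' l) < 0 :=
  turning_point_theorem_pos_general M S X hM hS hX φ hφ T Y hT hY hfl hT0 hturnM hturnX hσ u'
    hu'cont hu'
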